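/- Let n ≥ 1, let P_Y be a probability measure on ℝ^n with differentiable density p_Y satisfying ‖∇p_Y(y)‖ ≤ K for all y and some K > 0, and let ỹ ∈ ℝ^n with p_Y(ỹ) = a > 0. Let (μ_y)_{y∈ℝ^n} be a family of probability measures on ℝ^m with finite first moments (the posteriors), and set k = a/(2K) + ‖ỹ‖. Assume: (i) there is C_k < ∞ with W₁(μ_{y₁}, μ_{y₂}) ≤ C_k‖y₁ − y₂‖ for all ‖y₁‖, ‖y₂‖ ≤ k; (ii) P_Z is a probability measure on ℝ^d and G : ℝ^n × ℝ^d → ℝ^m is such that every pushforward G(y,·)_#P_Z has finite first moment, y ↦ G(y,z) is differentiable with ‖∇_y G(y,z)‖ ≤ L_k for all z ∈ supp(P_Z) and all ‖y‖ ≤ k, for some L_k > 0; (iii) the function y ↦ W₁(μ_y, G(y,·)_#P_Z) is measurable and ∫ W₁(μ_y, G(y,·)_#P_Z) dP_Y(y) ≤ ε for some 0 < ε ≤ 1. Then W₁(μ_{ỹ}, G(ỹ,·)_#P_Z) ≤ (L_k + C_k)·ε^{1/(n+1)}·a/(2K) + 2ε^{1/(n+1)}/(S_n (a/(2K))^n a),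 where S_n = π^{n/2}/Γ(n/2 + 1). -/

import Mathlib

open MeasureTheory Filter Topology Matrix

/-- The Wasserstein-1 distance: infimum over couplings of the expected distance. -/
noncomputable def W1 {E : Type*} [MeasurableSpace E] [NormedAddCommGroup E]
    (μ ν : Measure E) : ℝ :=
  (⨅ π ∈ {π : Measure (E × E) |
      π.map Prod.fst = μ ∧ π.map Prod.snd = ν ∧ IsProbabilityMeasure π},
    ∫⁻ p, ‖p.1 - p.2‖₊ ∂π).toReal

/-- A measure has finite first moment. -/
def HasFiniteFirstMoment {E : Type*} [MeasurableSpace E] [NormedAddCommGroup E]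
    (μ : Measure E) : Prop :=
  ∫⁻ x, ‖x‖₊ ∂μ ≠ ⊤

/-- Lebesgue volume of the unit ball in ℝ^n. -/
noncomputable def Sn (n : ℕ) : ℝ := Real.pi ^ ((n : ℝ) / 2) / Real.Gamma ((n : ℝ) / 2 + 1)

/-- The (topological) support of a measure: points all of whose open neighborhoods
have positive measure. -/
def measSupport {E : Type*} [TopologicalSpace E] [MeasurableSpace E]
    (μ : Measure E) : Set E := {x | ∀ U : Set E, IsOpen U → x ∈ U → 0 < μ U}

/-!
Let `r = ε^{1/(n+1)} · a/(2K)`. Since `‖∇p_Y‖ ≤ K`, `p_Y ≥ a/2` on `B = B̄(ỹ, r)`, so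
`P_Y(B) ≥ (a/2) S_n rⁿ`. For `y ∈ B`, the triangle inequality for `W₁` and the Lipschitz bounds on
`y ↦ μ_y` and `y ↦ G(y,·)` give `W₁(μ_ỹ, G(ỹ,·)_#P_Z) ≤ (L_k + C_k) r + W₁(μ_y, G(y,·)_#P_Z)`;
integrating over `B` against `∫ W₁ dP_Y ≤ ε` bounds the excess by `ε / P_Y(B)`, and the choice of
`r` balances the two terms. The triangle inequality for `W₁` comes from gluing two couplings
along their common marginal by disintegration.
-/

open ProbabilityTheory ENNReal Metric

lemma MeasureTheory.Measure.compProd_prod_map_fst {α β γ : Type*} [MeasurableSpace α]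
    [MeasurableSpace β] [MeasurableSpace γ] (ν : Measure α) [SFinite ν] (κ : Kernel α β)
    [IsSFiniteKernel κ] (η : Kernel α γ) [IsMarkovKernel η] :
    (ν ⊗ₘ (κ ×ₖ η)).map (fun q => (q.1, q.2.1)) = ν ⊗ₘ κ := by
  conv_rhs => rw [← Kernel.fst_prod κ η, Kernel.fst_eq, Measure.compProd_map measurable_fst]
  rfl

lemma MeasureTheory.Measure.compProd_prod_map_snd {α β γ : Type*} [MeasurableSpace α]
    [MeasurableSpace β] [MeasurableSpace γ] (ν : Measure α) [SFinite ν] (κ : Kernel α β)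
    [IsMarkovKernel κ] (η : Kernel α γ) [IsSFiniteKernel η] :
    (ν ⊗ₘ (κ ×ₖ η)).map (fun q => (q.1, q.2.2)) = ν ⊗ₘ η := by
  conv_rhs => rw [← Kernel.snd_prod κ η, Kernel.snd_eq, Measure.compProd_map measurable_snd]
  rfl

lemma MeasureTheory.Measure.exists_glue_of_fst_eq {α β γ : Type*} [MeasurableSpace α]
    [MeasurableSpace β] [StandardBorelSpace β] [Nonempty β] [MeasurableSpace γ]
    [StandardBorelSpace γ] [Nonempty γ] {σ : Measure (α × β)} {ρ : Measure (α × γ)}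
    [IsProbabilityMeasure σ] [IsFiniteMeasure ρ] (h : σ.fst = ρ.fst) :
    ∃ τ : Measure (α × β × γ), IsProbabilityMeasure τ ∧
      τ.map (fun q => (q.1, q.2.1)) = σ ∧ τ.map (fun q => (q.1, q.2.2)) = ρ :=
  ⟨σ.fst ⊗ₘ (σ.condKernel ×ₖ ρ.condKernel), inferInstance,
    by rw [compProd_prod_map_fst, σ.disintegrate],
    by rw [compProd_prod_map_snd, h, ρ.disintegrate]⟩

section Wasserstein

variable {E : Type*} [NormedAddCommGroup E] [MeasurableSpace E]

/-- `W1 μ ν` is `(eW1 μ ν).toReal` definitionally. -/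
noncomputable def eW1 (μ ν : Measure E) : ℝ≥0∞ :=
  ⨅ π ∈ {π : Measure (E × E) |
      π.map Prod.fst = μ ∧ π.map Prod.snd = ν ∧ IsProbabilityMeasure π},
    ∫⁻ p, ‖p.1 - p.2‖₊ ∂π

lemma W1_nonneg (μ ν : Measure E) : 0 ≤ W1 μ ν := ENNReal.toReal_nonneg

lemma eW1_le_lintegral {μ ν : Measure E} {π : Measure (E × E)}
    (h₁ : π.map Prod.fst = μ) (h₂ : π.map Prod.snd = ν) (hπ : IsProbabilityMeasure π) :
    eW1 μ ν ≤ ∫⁻ p, ‖p.1 - p.2‖₊ ∂π :=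
  iInf₂_le π ⟨h₁, h₂, hπ⟩

lemma W1_map_le_of_ae_norm_sub_le {Z : Type*} [MeasurableSpace Z] (P : Measure Z)
    [IsProbabilityMeasure P] {f g : Z → E} (hf : Measurable f) (hg : Measurable g) {C : ℝ}
    (hC : 0 ≤ C) (h : ∀ᵐ z ∂P, ‖f z - g z‖ ≤ C) : W1 (P.map f) (P.map g) ≤ C := by
  have hfg : Measurable fun z => (f z, g z) := hf.prodMk hg
  refine ENNReal.toReal_le_of_le_ofReal hC <| (eW1_le_lintegral (π := P.map fun z => (f z, g z))
    ?_ ?_ (Measure.isProbabilityMeasure_map hfg.aemeasurable)).trans ?_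
  · rw [Measure.map_map measurable_fst hfg]; rfl
  · rw [Measure.map_map measurable_snd hfg]; rfl
  calc ∫⁻ p, ‖p.1 - p.2‖₊ ∂(P.map fun z => (f z, g z)) ≤ ∫⁻ z, ‖f z - g z‖₊ ∂P :=
        lintegral_map_le _ _
    _ ≤ ∫⁻ _, ENNReal.ofReal C ∂P := lintegral_mono_ae <| h.mono fun z hz => by
        rw [← enorm_eq_nnnorm, ← ofReal_norm]; exact ENNReal.ofReal_le_ofReal hz
    _ = ENNReal.ofReal C := by simp

lemma nonneg_of_W1_le_mul_norm_sub {Y : Type*} [NormedAddCommGroup Y] [NormedSpace ℝ Y]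
    [Nontrivial Y] (μ : Y → Measure E) {C δ : ℝ} {x : Y} (hδ : 0 < δ)
    (h : ∀ y ∈ closedBall x δ, W1 (μ x) (μ y) ≤ C * ‖x - y‖) : 0 ≤ C := by
  obtain ⟨v, hv⟩ := exists_norm_eq Y hδ.le
  have hC := h (x + v) (by simp [hv])
  rw [sub_add_cancel_left, norm_neg, hv] at hC
  exact nonneg_of_mul_nonneg_left ((W1_nonneg _ _).trans hC) hδ

variable [BorelSpace E]

lemma lintegral_nnnorm_sub_le_add {μ ν : Measure E} {π : Measure (E × E)}
    (h₁ : π.map Prod.fst = μ) (h₂ : π.map Prod.snd = ν) :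
    ∫⁻ p, ‖p.1 - p.2‖₊ ∂π ≤ (∫⁻ x, ‖x‖₊ ∂μ) + ∫⁻ x, ‖x‖₊ ∂ν := by
  calc ∫⁻ p, ‖p.1 - p.2‖₊ ∂π ≤ ∫⁻ p, (‖p.1‖ₑ + ‖p.2‖ₑ) ∂π := lintegral_mono fun p => enorm_sub_le
    _ = (∫⁻ x, ‖x‖₊ ∂μ) + ∫⁻ x, ‖x‖₊ ∂ν := by
        simp only [← enorm_eq_nnnorm]
        rw [lintegral_add_left measurable_fst.enorm, ← h₁, ← h₂,
          lintegral_map measurable_enorm measurable_fst,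
          lintegral_map measurable_enorm measurable_snd]

lemma eW1_ne_top {μ ν : Measure E} [IsProbabilityMeasure μ] [IsProbabilityMeasure ν]
    (hμ : HasFiniteFirstMoment μ) (hν : HasFiniteFirstMoment ν) : eW1 μ ν ≠ ⊤ :=
  ne_top_of_le_ne_top (add_ne_top.mpr ⟨hμ, hν⟩) <|
    (eW1_le_lintegral Measure.fst_prod Measure.snd_prod inferInstance).trans
      (lintegral_nnnorm_sub_le_add Measure.fst_prod Measure.snd_prod)

variable [SecondCountableTopology E] [StandardBorelSpace E]

lemma exists_coupling_lintegral_le_add {μ ν ρ : Measure E} {π₁ π₂ : Measure (E × E)}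
    (h₁f : π₁.map Prod.fst = μ) (h₁s : π₁.map Prod.snd = ν) (h₁ : IsProbabilityMeasure π₁)
    (h₂f : π₂.map Prod.fst = ν) (h₂s : π₂.map Prod.snd = ρ) (h₂ : IsProbabilityMeasure π₂) :
    ∃ π : Measure (E × E), π.map Prod.fst = μ ∧ π.map Prod.snd = ρ ∧ IsProbabilityMeasure π ∧
      ∫⁻ p, ‖p.1 - p.2‖₊ ∂π ≤ (∫⁻ p, ‖p.1 - p.2‖₊ ∂π₁) + ∫⁻ p, ‖p.1 - p.2‖₊ ∂π₂ := by
  set σ := π₁.map Prod.swap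
  have : IsProbabilityMeasure σ := Measure.isProbabilityMeasure_map (by fun_prop)
  have hfst : σ.fst = π₂.fst := by
    rw [Measure.fst, Measure.map_map measurable_fst measurable_swap]
    exact h₁s.trans h₂f.symm
  obtain ⟨τ, hτ, hτ₁, hτ₂⟩ := Measure.exists_glue_of_fst_eq hfst
  refine ⟨τ.map Prod.snd, ?_, ?_, Measure.isProbabilityMeasure_map (by fun_prop), ?_⟩
  · calc (τ.map Prod.snd).map Prod.fst = (τ.map fun q => (q.1, q.2.1)).map Prod.snd := by
          rw [Measure.map_map (by fun_prop) (by fun_prop),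
            Measure.map_map (by fun_prop) (by fun_prop)]
          rfl
      _ = μ := by rw [hτ₁, Measure.map_map measurable_snd measurable_swap]; exact h₁f
  · calc (τ.map Prod.snd).map Prod.snd = (τ.map fun q => (q.1, q.2.2)).map Prod.snd := by
          rw [Measure.map_map (by fun_prop) (by fun_prop),
            Measure.map_map (by fun_prop) (by fun_prop)]
          rfl
      _ = ρ := by rw [hτ₂, h₂s]
  simp only [← enorm_eq_nnnorm, ← edist_eq_enorm_sub]
  calc ∫⁻ p, edist p.1 p.2 ∂τ.map Prod.snd = ∫⁻ q, edist q.2.1 q.2.2 ∂τ :=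
        lintegral_map (by fun_prop) measurable_snd
    _ ≤ ∫⁻ q, (edist q.2.1 q.1 + edist q.1 q.2.2) ∂τ :=
        lintegral_mono fun q => edist_triangle _ _ _
    _ = (∫⁻ q, edist q.2.1 q.1 ∂τ) + ∫⁻ q, edist q.1 q.2.2 ∂τ :=
        lintegral_add_left (by fun_prop) _
    _ = (∫⁻ p, edist p.2 p.1 ∂σ) + ∫⁻ p, edist p.1 p.2 ∂π₂ := by
        rw [← hτ₁, ← hτ₂, lintegral_map (by fun_prop) (by fun_prop),
          lintegral_map (by fun_prop) (by fun_prop)]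
    _ = (∫⁻ p, edist p.1 p.2 ∂π₁) + ∫⁻ p, edist p.1 p.2 ∂π₂ := by
        rw [lintegral_map (by fun_prop) measurable_swap]
        rfl

lemma eW1_triangle (μ ν ρ : Measure E) : eW1 μ ρ ≤ eW1 μ ν + eW1 ν ρ := by
  simp only [eW1, ENNReal.iInf_add, ENNReal.add_iInf]
  refine le_iInf₂ fun π₂ ⟨h₂f, h₂s, h₂⟩ => le_iInf₂ fun π₁ ⟨h₁f, h₁s, h₁⟩ => ?_
  obtain ⟨π, hf, hs, hπ, hcost⟩ := exists_coupling_lintegral_le_add h₁f h₁s h₁ h₂f h₂s h₂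
  exact (eW1_le_lintegral hf hs hπ).trans hcost

lemma W1_triangle {μ ν ρ : Measure E} [IsProbabilityMeasure μ] [IsProbabilityMeasure ν]
    [IsProbabilityMeasure ρ] (hμ : HasFiniteFirstMoment μ) (hν : HasFiniteFirstMoment ν)
    (hρ : HasFiniteFirstMoment ρ) : W1 μ ρ ≤ W1 μ ν + W1 ν ρ :=
  ENNReal.toReal_le_add (eW1_triangle μ ν ρ) (eW1_ne_top hμ hν) (eW1_ne_top hν hρ)

lemma W1_le_add_add {μ₁ μ₂ ν₁ ν₂ : Measure E} [IsProbabilityMeasure μ₁]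
    [IsProbabilityMeasure μ₂] [IsProbabilityMeasure ν₁] [IsProbabilityMeasure ν₂]
    (hμ₁ : HasFiniteFirstMoment μ₁) (hμ₂ : HasFiniteFirstMoment μ₂)
    (hν₁ : HasFiniteFirstMoment ν₁) (hν₂ : HasFiniteFirstMoment ν₂) :
    W1 μ₁ ν₁ ≤ W1 μ₁ μ₂ + W1 μ₂ ν₂ + W1 ν₂ ν₁ :=
  (W1_triangle hμ₁ hν₂ hν₁).trans <| add_le_add_left (W1_triangle hμ₁ hμ₂ hν₂) _

end Wasserstein

lemma measSupport_eq_support {X : Type*} [TopologicalSpace X] [MeasurableSpace X]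
    (μ : Measure X) : measSupport μ = μ.support := by
  simp only [measSupport, Measure.support_eq_forall_isOpen]
  grind

lemma W1_map_le_mul_norm_sub_of_hasFDerivAt {Y Z F : Type*} [NormedAddCommGroup Y]
    [NormedSpace ℝ Y] [NormedAddCommGroup F] [NormedSpace ℝ F] [MeasurableSpace F]
    [TopologicalSpace Z] [HereditarilyLindelofSpace Z] [MeasurableSpace Z] (P : Measure Z)
    [IsProbabilityMeasure P] {G : Y → Z → F} (hG : ∀ y, Measurable (G y))
    {DG : Y → Z → Y →L[ℝ] F} {s : Set Y} (hs : Convex ℝ s) {L : ℝ} (hL : 0 ≤ L)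
    (hDG : ∀ z ∈ measSupport P, ∀ y ∈ s, HasFDerivAt (fun y' => G y' z) (DG y z) y ∧
      ‖DG y z‖ ≤ L)
    {y₁ y₂ : Y} (hy₁ : y₁ ∈ s) (hy₂ : y₂ ∈ s) :
    W1 (P.map (G y₁)) (P.map (G y₂)) ≤ L * ‖y₁ - y₂‖ := by
  refine W1_map_le_of_ae_norm_sub_le P (hG y₁) (hG y₂) (by positivity) ?_
  filter_upwards [measSupport_eq_support P ▸ Measure.support_mem_ae] with z hz
  exact hs.norm_image_sub_le_of_norm_hasFDerivWithin_le
    (fun y hy => (hDG z hz y hy).1.hasFDerivWithinAt) (fun y hy => (hDG z hz y hy).2) hy₂ hy₁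

lemma ofReal_mul_measure_closedBall_le_withDensity {E : Type*} [NormedAddCommGroup E]
    [NormedSpace ℝ E] [MeasurableSpace E] [OpensMeasurableSpace E] (μ : Measure E)
    {f : E → ℝ} {f' : E → E →L[ℝ] ℝ} {K : ℝ} (hf : ∀ x, HasFDerivAt f (f' x) x)
    (hf' : ∀ x, ‖f' x‖ ≤ K) (x₀ : E) (r : ℝ) :
    ENNReal.ofReal (f x₀ - K * r) * μ (closedBall x₀ r) ≤
      μ.withDensity (fun x => ENNReal.ofReal (f x)) (closedBall x₀ r) := by
  have hK : 0 ≤ K := (norm_nonneg _).trans (hf' 0)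
  rw [withDensity_apply _ measurableSet_closedBall, ← setLIntegral_const]
  refine setLIntegral_mono' measurableSet_closedBall fun x hx => ENNReal.ofReal_le_ofReal ?_
  have hlip : ‖f x - f x₀‖ ≤ K * ‖x - x₀‖ :=
    convex_univ.norm_image_sub_le_of_norm_hasFDerivWithin_le
      (fun y _ => (hf y).hasFDerivWithinAt) (fun y _ => hf' y) trivial trivial
  have hx : K * ‖x - x₀‖ ≤ K * r := by gcongr; exact mem_closedBall_iff_norm.mp hx
  linarith [neg_abs_le (f x - f x₀), Real.norm_eq_abs (f x - f x₀)]

lemma Sn_pos (n : ℕ) : 0 < Sn n := by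
  unfold Sn; positivity

lemma EuclideanSpace.volume_closedBall_eq_Sn {n : ℕ} [NeZero n] (x : EuclideanSpace ℝ (Fin n))
    {r : ℝ} (hr : 0 ≤ r) : volume (closedBall x r) = ENNReal.ofReal (Sn n * r ^ n) := by
  rw [EuclideanSpace.volume_closedBall, Fintype.card_fin, ← ENNReal.ofReal_pow hr,
    ← ENNReal.ofReal_mul (by positivity), mul_comm, Sn, Real.sqrt_eq_rpow, ← Real.rpow_natCast,
    ← Real.rpow_mul Real.pi_pos.le, one_div_mul_eq_div]

lemma ofReal_mul_Sn_le_withDensity_closedBall {n : ℕ} [NeZero n]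
    {f : EuclideanSpace ℝ (Fin n) → ℝ} {f' : EuclideanSpace ℝ (Fin n) → _ →L[ℝ] ℝ} {K : ℝ}
    (hf : ∀ x, HasFDerivAt f (f' x) x) (hf' : ∀ x, ‖f' x‖ ≤ K) (x₀ : EuclideanSpace ℝ (Fin n))
    {r : ℝ} (hr : 0 ≤ r) (hKr : K * r ≤ f x₀ / 2) :
    ENNReal.ofReal (f x₀ / 2 * (Sn n * r ^ n)) ≤
      volume.withDensity (fun x => ENNReal.ofReal (f x)) (closedBall x₀ r) := by
  have hKr₀ : 0 ≤ K * r := mul_nonneg ((norm_nonneg _).trans (hf' 0)) hr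
  refine le_trans ?_ (ofReal_mul_measure_closedBall_le_withDensity volume hf hf' x₀ r)
  rw [EuclideanSpace.volume_closedBall_eq_Sn _ hr, ← ENNReal.ofReal_mul (by linarith)]
  exact ENNReal.ofReal_le_ofReal
    (mul_le_mul_of_nonneg_right (by linarith) (mul_nonneg (Sn_pos n).le (pow_nonneg hr n)))

lemma le_add_div_of_forall_mem_le_add {X : Type*} [MeasurableSpace X] {ν : Measure X}
    {s : Set X} (hs : MeasurableSet s) {f : X → ℝ} {w c m ε : ℝ} (hm : 0 < m) (hε : 0 ≤ ε)
    (hνs : ENNReal.ofReal m ≤ ν s) (hf : ∀ y ∈ s, w ≤ c + f y)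
    (hint : ∫⁻ y, ENNReal.ofReal (f y) ∂ν ≤ ENNReal.ofReal ε) : w ≤ c + ε / m := by
  rcases le_or_gt (w - c) 0 with hwc | hwc
  · linarith [div_nonneg hε hm.le]
  suffices (w - c) * m ≤ ε by rw [← sub_le_iff_le_add', le_div_iff₀ hm]; exact this
  rw [← ENNReal.ofReal_le_ofReal_iff hε, ENNReal.ofReal_mul hwc.le]
  calc ENNReal.ofReal (w - c) * ENNReal.ofReal m ≤ ENNReal.ofReal (w - c) * ν s := by gcongr
    _ = ∫⁻ y, s.indicator (fun _ => ENNReal.ofReal (w - c)) y ∂ν :=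
        (lintegral_indicator_const hs _).symm
    _ ≤ ∫⁻ y, ENNReal.ofReal (f y) ∂ν := lintegral_mono fun y => by
        by_cases hy : y ∈ s
        · simpa [hy] using ENNReal.ofReal_le_ofReal (by linarith [hf y hy])
        · simp [hy]
    _ ≤ ENNReal.ofReal ε := hint

lemma rpow_one_div_add_one_pow_succ {x : ℝ} (hx : 0 ≤ x) (n : ℕ) :
    (x ^ (1 / ((n : ℝ) + 1))) ^ (n + 1) = x := by
  rw [one_div, show (n : ℝ) + 1 = ((n + 1 : ℕ) : ℝ) by push_cast; rfl]
  exact Real.rpow_inv_natCast_pow hx n.succ_ne_zero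

theorem stmt_6_general {n m d : ℕ} (hn : 1 ≤ n)
    (pY : EuclideanSpace ℝ (Fin n) → ℝ)
    (PY : Measure (EuclideanSpace ℝ (Fin n)))
    (hPY : PY = volume.withDensity (fun y => ENNReal.ofReal (pY y)))
    (K : ℝ) (hK : 0 < K)
    (DY : EuclideanSpace ℝ (Fin n) → (EuclideanSpace ℝ (Fin n) →L[ℝ] ℝ))
    (hderivY : ∀ y, HasFDerivAt pY (DY y) y)
    (hDYbound : ∀ y, ‖DY y‖ ≤ K)
    (ytil : EuclideanSpace ℝ (Fin n)) (a : ℝ) (ha : 0 < a) (hpa : pY ytil = a)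
    (μ : EuclideanSpace ℝ (Fin n) → Measure (EuclideanSpace ℝ (Fin m)))
    (hμprob : ∀ y, IsProbabilityMeasure (μ y))
    (hμmom : ∀ y, HasFiniteFirstMoment (μ y))
    (k : ℝ) (hk : k = a / (2 * K) + ‖ytil‖)
    (Ck : ℝ)
    (hCk : ∀ y₁ y₂ : EuclideanSpace ℝ (Fin n), ‖y₁‖ ≤ k → ‖y₂‖ ≤ k →
      W1 (μ y₁) (μ y₂) ≤ Ck * ‖y₁ - y₂‖)
    (PZ : Measure (EuclideanSpace ℝ (Fin d))) (hPZprob : IsProbabilityMeasure PZ)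
    (G : EuclideanSpace ℝ (Fin n) → EuclideanSpace ℝ (Fin d) → EuclideanSpace ℝ (Fin m))
    (hGmeas : ∀ y : EuclideanSpace ℝ (Fin n), Measurable (G y))
    (hGmom : ∀ y : EuclideanSpace ℝ (Fin n), HasFiniteFirstMoment (PZ.map (G y)))
    (Lk : ℝ) (hLk : 0 < Lk)
    (DG : EuclideanSpace ℝ (Fin n) → EuclideanSpace ℝ (Fin d) →
      (EuclideanSpace ℝ (Fin n) →L[ℝ] EuclideanSpace ℝ (Fin m)))
    (hderivG : ∀ z ∈ measSupport PZ, ∀ y : EuclideanSpace ℝ (Fin n), ‖y‖ ≤ k →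
      HasFDerivAt (fun y' => G y' z) (DG y z) y ∧ ‖DG y z‖ ≤ Lk)
    (ε : ℝ) (hε0 : 0 < ε) (hε1 : ε ≤ 1)
    (hint : ∫⁻ y, ENNReal.ofReal (W1 (μ y) (PZ.map (G y))) ∂PY ≤ ENNReal.ofReal ε) :
    W1 (μ ytil) (PZ.map (G ytil)) ≤
      (Lk + Ck) * (ε ^ (1 / ((n : ℝ) + 1)) * a / (2 * K)) +
        2 * ε ^ (1 / ((n : ℝ) + 1)) / (Sn n * (a / (2 * K)) ^ n * a) := by
  have : NeZero n := ⟨by omega⟩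
  have : ∀ y, IsProbabilityMeasure (PZ.map (G y)) := fun y =>
    Measure.isProbabilityMeasure_map (hGmeas y).aemeasurable
  set δ := a / (2 * K)
  set t := ε ^ (1 / ((n : ℝ) + 1))
  set r := t * δ
  have hδ : 0 < δ := by positivity
  have hr : 0 < r := mul_pos (Real.rpow_pos_of_pos hε0 _) hδ
  have hrδ : r ≤ δ := mul_le_of_le_one_left hδ.le (Real.rpow_le_one hε0.le hε1 (by positivity))
  have hytil : ‖ytil‖ ≤ k := by rw [hk]; linarith
  have hball : ∀ y ∈ closedBall ytil δ, ‖y‖ ≤ k := fun y hy => by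
    linarith [norm_le_of_mem_closedBall hy]
  have hCk0 : 0 ≤ Ck :=
    nonneg_of_W1_le_mul_norm_sub μ hδ fun y hy => hCk ytil y hytil (hball y hy)
  have hmass : ENNReal.ofReal (a / 2 * (Sn n * r ^ n)) ≤ PY (closedBall ytil r) := by
    refine hPY ▸ hpa ▸ ofReal_mul_Sn_le_withDensity_closedBall hderivY hDYbound ytil hr.le ?_
    calc K * r ≤ K * δ := by gcongr
      _ = pY ytil / 2 := by simp only [δ, hpa]; field_simp
  have hlocal : ∀ y ∈ closedBall ytil r, W1 (μ ytil) (PZ.map (G ytil)) ≤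
      (Lk + Ck) * r + W1 (μ y) (PZ.map (G y)) := by
    intro y hy
    have hyk := hball y (closedBall_subset_closedBall hrδ hy)
    have hdist : ‖ytil - y‖ ≤ r := by rw [norm_sub_rev]; exact mem_closedBall_iff_norm.mp hy
    have hμ := (hCk ytil y hytil hyk).trans (mul_le_mul_of_nonneg_left hdist hCk0)
    have hG := (W1_map_le_mul_norm_sub_of_hasFDerivAt PZ hGmeas (convex_closedBall 0 k) hLk.le
      (fun z hz y hy => hderivG z hz y (mem_closedBall_zero_iff.mp hy))
      (mem_closedBall_zero_iff.mpr hyk) (mem_closedBall_zero_iff.mpr hytil)).trans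
      (mul_le_mul_of_nonneg_left (norm_sub_rev y ytil ▸ hdist) hLk.le)
    linarith [W1_le_add_add (hμmom ytil) (hμmom y) (hGmom ytil) (hGmom y)]
  have hmain := le_add_div_of_forall_mem_le_add measurableSet_closedBall
    (mul_pos (half_pos ha) (mul_pos (Sn_pos n) (pow_pos hr n))) hε0.le hmass hlocal hint
  have hε : ε / (a / 2 * (Sn n * r ^ n)) = 2 * t / (Sn n * δ ^ n * a) := by
    rw [← rpow_one_div_add_one_pow_succ hε0.le n]
    field_simp
    ring
  rw [hε] at hmain
  convert hmain using 2
  ring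

/-- pointwise Wasserstein bound for a single observation. -/
theorem stmt_6 {n m d : ℕ} (hn : 1 ≤ n)
    (pY : EuclideanSpace ℝ (Fin n) → ℝ)
    (PY : Measure (EuclideanSpace ℝ (Fin n)))
    (hPYprob : IsProbabilityMeasure PY)
    (hPY : PY = volume.withDensity (fun y => ENNReal.ofReal (pY y)))
    (K : ℝ) (hK : 0 < K)
    (DY : EuclideanSpace ℝ (Fin n) → (EuclideanSpace ℝ (Fin n) →L[ℝ] ℝ))
    (hderivY : ∀ y, HasFDerivAt pY (DY y) y)
    (hDYbound : ∀ y, ‖DY y‖ ≤ K)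
    (ytil : EuclideanSpace ℝ (Fin n)) (a : ℝ) (ha : 0 < a) (hpa : pY ytil = a)
    (μ : EuclideanSpace ℝ (Fin n) → Measure (EuclideanSpace ℝ (Fin m)))
    (hμprob : ∀ y, IsProbabilityMeasure (μ y))
    (hμmom : ∀ y, HasFiniteFirstMoment (μ y))
    (k : ℝ) (hk : k = a / (2 * K) + ‖ytil‖)
    (Ck : ℝ)
    (hCk : ∀ y₁ y₂ : EuclideanSpace ℝ (Fin n), ‖y₁‖ ≤ k → ‖y₂‖ ≤ k →
      W1 (μ y₁) (μ y₂) ≤ Ck * ‖y₁ - y₂‖)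
    (PZ : Measure (EuclideanSpace ℝ (Fin d))) (hPZprob : IsProbabilityMeasure PZ)
    (G : EuclideanSpace ℝ (Fin n) → EuclideanSpace ℝ (Fin d) → EuclideanSpace ℝ (Fin m))
    (hGmeas : ∀ y : EuclideanSpace ℝ (Fin n), Measurable (G y))
    (hGmom : ∀ y : EuclideanSpace ℝ (Fin n), HasFiniteFirstMoment (PZ.map (G y)))
    (Lk : ℝ) (hLk : 0 < Lk)
    (DG : EuclideanSpace ℝ (Fin n) → EuclideanSpace ℝ (Fin d) →
      (EuclideanSpace ℝ (Fin n) →L[ℝ] EuclideanSpace ℝ (Fin m)))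
    (hderivG : ∀ z ∈ measSupport PZ, ∀ y : EuclideanSpace ℝ (Fin n), ‖y‖ ≤ k →
      HasFDerivAt (fun y' => G y' z) (DG y z) y ∧ ‖DG y z‖ ≤ Lk)
    (hWmeas : Measurable fun y => W1 (μ y) (PZ.map (G y)))
    (ε : ℝ) (hε0 : 0 < ε) (hε1 : ε ≤ 1)
    (hint : ∫⁻ y, ENNReal.ofReal (W1 (μ y) (PZ.map (G y))) ∂PY ≤ ENNReal.ofReal ε) :
    W1 (μ ytil) (PZ.map (G ytil)) ≤
      (Lk + Ck) * (ε ^ (1 / ((n : ℝ) + 1)) * a / (2 * K)) +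
        2 * ε ^ (1 / ((n : ℝ) + 1)) / (Sn n * (a / (2 * K)) ^ n * a) :=
  stmt_6_general hn pY PY hPY K hK DY hderivY hDYbound ytil a ha hpa μ hμprob hμmom k hk Ck hCk PZ
    hPZprob G hGmeas hGmom Lk hLk DG hderivG ε hε0 hε1 hint
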